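/- arXiv:math/0402439 — 2 statements merged into one kernel-verified Lean document; each statement's English description precedes it below -/
import Mathlib

section
/- Let t ≥ 2 with t ≡ 2a (mod 4), a ∈ {0,1}. Let π be a partition and σ a t-core partition such that n_i(σ) = n_i(π) for all 0 ≤ i ≤ t−1 (σ is the t-core of π). Then t divides |π| − |σ| and srank(π) ≡ srank(σ) + 2a·(|π| − |σ|)/t (mod 4). -/
open scoped Classical

noncomputable section

namespace BGG

/-- The number of odd parts of a partition (given as a multiset of parts). -/
def oddParts (M : Multiset ℕ) : ℕ := (M.filter (fun p => Odd p)).card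

/-- The `j`-th part of the conjugate partition: the number of parts that are `≥ j`. -/
def conjCount (M : Multiset ℕ) (j : ℕ) : ℕ := (M.filter (fun p => j ≤ p)).card

/-- The number of odd parts of the conjugate partition. -/
def oddConjParts (M : Multiset ℕ) : ℕ :=
  ((Finset.Icc 1 M.sum).filter (fun j => Odd (conjCount M j))).card

/-- Stanley's srank: the number of odd parts minus the number of odd parts of the conjugate. -/
def srank (M : Multiset ℕ) : ℤ := (oddParts M : ℤ) - (oddConjParts M : ℤ)

/-- The `x`-th part `λ_x` (for `x ≥ 1`) of the partition with parts `M`. -/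
def rowLen (M : Multiset ℕ) (x : ℕ) : ℕ :=
  ((Finset.Icc 1 M.sum).filter (fun j => x ≤ conjCount M j)).card

/-- The cell in row `x`, column `y` (both indexed from 1) lies in the Young diagram. -/
def CellMem (M : Multiset ℕ) (x y : ℕ) : Prop := 1 ≤ x ∧ 1 ≤ y ∧ x ≤ conjCount M y

/-- A partition is a `t`-core if no cell of its Young diagram has hook length divisible
by `t`. -/
def IsTCore (t : ℕ) (M : Multiset ℕ) : Prop :=
  ∀ x y : ℕ, CellMem M x y → ¬ (t ∣ ((rowLen M x - y) + (conjCount M y - x) + 1))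

/-- `rLabel t M i` is the number of cells of the Young diagram labelled `i`, where the cell in
row `x` and column `y` is labelled `(y - x) mod t`. -/
def rLabel (t : ℕ) (M : Multiset ℕ) (i : ℕ) : ℕ :=
  (((Finset.Icc 1 M.card) ×ˢ (Finset.Icc 1 M.sum)).filter
    (fun c => CellMem M c.1 c.2 ∧ ((c.2 : ℤ) - (c.1 : ℤ)) % (t : ℤ) = (i : ℤ))).card

/-- `nvec t M i = r_i - r_{(i+1) mod t}`. -/
def nvec (t : ℕ) (M : Multiset ℕ) (i : ℕ) : ℤ :=
  (rLabel t M i : ℤ) - (rLabel t M ((i + 1) % t) : ℤ)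

/-- The set of beta-numbers `β_j = λ_j + ν - j`, `1 ≤ j ≤ ν`, where `ν = t * (number of parts)`
is a multiple of `t` that is at least the number of parts. -/
def betaSet (t : ℕ) (M : Multiset ℕ) : Finset ℕ :=
  (Finset.Icc 1 (t * M.card)).image (fun j => rowLen M j + t * M.card - j)

/-- The `i`-th component `π̂_i` of the `t`-quotient of a partition: if the beta-numbers
congruent to `i` mod `t` are `t c₁ + i > t c₂ + i > ⋯ > t c_s + i` then `π̂_i` has parts
`c_k - (s - k)` (zeros discarded). -/
def tQuotient (t : ℕ) (M : Multiset ℕ) (i : ℕ) : Multiset ℕ :=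
  Multiset.filter (fun p => 0 < p)
    (((betaSet t M).filter (fun e => e % t = i)).val.map
      (fun e => (e - i) / t - ((betaSet t M).filter (fun e' => e' % t = i ∧ e' < e)).card))

/-- The 2-quotient-rank: the number of parts of `π̂₀` minus the number of parts of `π̂₁`. -/
def tqrank (M : Multiset ℕ) : ℤ :=
  ((tQuotient 2 M 0).card : ℤ) - ((tQuotient 2 M 1).card : ℤ)

/-- The Andrews-Garvan crank. -/
def crank (M : Multiset ℕ) : ℤ :=
  if M.count 1 = 0 then (M.sup : ℤ)
  else ((M.filter (fun p => M.count 1 < p)).card : ℤ) - (M.count 1 : ℤ)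

/-- `pi1 M` is the partition with `⌊f_{2i}/2⌋` parts equal to `i` for each `i ≥ 1`, where
`f_j` is the number of parts of `M` equal to `j`. -/
def pi1 (M : Multiset ℕ) : Multiset ℕ :=
  (Finset.Icc 1 M.sum).val.bind (fun i => Multiset.replicate (M.count (2 * i) / 2) i)

/-- Partitions of type B. -/
def TypeB (M : Multiset ℕ) : Prop :=
  M = ({3, 1} : Multiset ℕ) ∨
    (M.sum ≠ 4 ∧ rowLen M 2 + 2 ≤ rowLen M 1 ∧ conjCount M 2 + 2 ≤ conjCount M 1 ∧
      ¬ ((rowLen M 1 : ℤ) - 2 = (rowLen M 2 : ℤ) ∧ Even (rowLen M 2)) ∧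
      ∀ p : ℕ, Even p → M.count p ≤ 1)

/-- The St-crank: `crank(π₁) + srank(π)/2 + Ψ(π)`, where `Ψ(π) = 1` iff `π` is of type B. -/
noncomputable def stcrank (M : Multiset ℕ) : ℤ :=
  crank (pi1 M) + srank M / 2 + (if TypeB M then 1 else 0)

/-- The BG-rank: the alternating sum of parities of the parts, listed in nonincreasing order. -/
def bgRank (M : Multiset ℕ) : ℤ :=
  ∑ j ∈ Finset.range M.card,
    (-1 : ℤ) ^ j * (if Odd (((M.sort (· ≤ ·)).reverse).getD j 0) then 1 else 0)

/-- The residue mod 5 of the 5-core-crank of a partition of a number `≡ 4 (mod 5)`. -/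
def c5 (M : Multiset ℕ) : ℤ :=
  2 + 2 * (rLabel 5 M 0 : ℤ) + (rLabel 5 M 1 : ℤ) - (rLabel 5 M 3 : ℤ) - 2 * (rLabel 5 M 4 : ℤ)

/-! Label the cell in row `x` and column `y` by `(y - x) mod t`. Counting column by column,
`2 r₁ = |π| - 𝒪(π′) + 2 ∑_{y even} (λ′_y mod 2)` for the labels mod 2, while
`|π| = 𝒪(π) + 2 ∑_{y even} λ′_y`; since `λ′_y + (λ′_y mod 2)` is even this gives
`srank(π) ≡ 2 r₁(π) (mod 4)`. When `2 ∣ t` the mod-2 count `r₁` is the sum of the mod-`t`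
counts `r_i` over odd `i`. Equal `n`-vectors make `r_i(π) - r_i(σ)` a constant `d`, so
`|π| - |σ| = t d` and `r₁(π) - r₁(σ) = (t / 2) d`, whence
`srank(π) - srank(σ) ≡ t d ≡ 2 a d (mod 4)`. -/

open Finset

lemma card_filter_Icc_mod_two (c r : ℕ) (hr : r < 2) :
    #{x ∈ Icc 1 c | x % 2 = r} = (c + r) / 2 := by
  induction c with
  | zero => simp only [Icc_eq_empty_of_lt zero_lt_one, filter_empty, card_empty]; omega
  | succ c ih =>
    rw [← insert_Icc_right_eq_Icc_add_one (by omega), filter_insert]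
    split_ifs
    · rw [card_insert_of_notMem (by simp), ih]; omega
    · rw [ih]; omega

lemma card_filter_range_mod_two_eq_one (t : ℕ) : #{i ∈ range t | i % 2 = 1} = t / 2 := by
  rw [← Nat.card_multiples t 2]
  congr 1
  exact filter_congr fun i _ => ⟨fun _ => by omega, fun _ => by omega⟩

lemma conjCount_cons (p : ℕ) (M : Multiset ℕ) (y : ℕ) :
    conjCount (p ::ₘ M) y = conjCount M y + if y ≤ p then 1 else 0 := by
  unfold conjCount
  split_ifs with h <;> simp [h]

lemma conjCount_le_card (M : Multiset ℕ) (y : ℕ) : conjCount M y ≤ M.card :=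
  Multiset.card_le_card (Multiset.filter_le _ _)

lemma sum_conjCount_Icc {M : Multiset ℕ} {s : ℕ} (hs : ∀ p ∈ M, p ≤ s) :
    ∑ y ∈ Icc 1 s, conjCount M y = M.sum := by
  induction M using Multiset.induction with
  | empty => simp [conjCount]
  | cons p M ih =>
    have hIcc : {y ∈ Icc 1 s | y ≤ p} = Icc 1 p := by
      ext y; simp only [mem_filter, mem_Icc]; have := hs p (Multiset.mem_cons_self _ _); omega
    rw [Multiset.sum_cons, ← ih fun q hq => hs q (Multiset.mem_cons_of_mem hq)]
    simp only [conjCount_cons, sum_add_distrib, ← card_filter, hIcc, Nat.card_Icc]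
    omega

lemma sum_eq_oddParts_add_two_mul {M : Multiset ℕ} {s : ℕ} (hs : ∀ p ∈ M, p ≤ s) :
    M.sum = oddParts M + 2 * ∑ y ∈ Icc 1 s with y % 2 = 0, conjCount M y := by
  induction M using Multiset.induction with
  | empty => simp [oddParts, conjCount]
  | cons p M ih =>
    have hIcc : {y ∈ {y ∈ Icc 1 s | y % 2 = 0} | y ≤ p} = {y ∈ Icc 1 p | y % 2 = 0} := by
      ext y; simp only [mem_filter, mem_Icc]; have := hs p (Multiset.mem_cons_self _ _); omega
    have hodd : oddParts (p ::ₘ M) = oddParts M + p % 2 := by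
      rcases Nat.even_or_odd' p with ⟨k, rfl | rfl⟩ <;>
        simp [oddParts, Nat.odd_iff]
    rw [Multiset.sum_cons, ih fun q hq => hs q (Multiset.mem_cons_of_mem hq), hodd]
    simp only [conjCount_cons, sum_add_distrib, ← card_filter, hIcc,
      card_filter_Icc_mod_two p 0 two_pos]
    omega

lemma oddConjParts_eq_sum (M : Multiset ℕ) :
    oddConjParts M = ∑ y ∈ Icc 1 M.sum, conjCount M y % 2 := by
  rw [oddConjParts, card_filter]
  exact sum_congr rfl fun y _ => by split_ifs with h <;> simp_all [Nat.odd_iff]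

def colLabel (t y c i : ℕ) : ℕ := #{x ∈ Icc 1 c | ((y : ℤ) - (x : ℕ)) % t = i}

lemma colLabel_one (y c : ℕ) : colLabel 1 y c 0 = c := by
  simp [colLabel]

lemma colLabel_two_one (y c : ℕ) : colLabel 2 y c 1 = (c + (y + 1) % 2) / 2 := by
  rw [colLabel, ← card_filter_Icc_mod_two c _ (Nat.mod_lt _ two_pos)]
  congr 1
  exact filter_congr fun x _ => by omega

lemma colLabel_eq_sum_of_dvd {d t : ℕ} (hd : d ∣ t) (ht : 0 < t) (y c j : ℕ) :
    colLabel d y c j = ∑ i ∈ range t with i % d = j, colLabel t y c i := by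
  have hlabel : ∀ z : ℤ, ((z % t).toNat : ℤ) = z % t := fun z =>
    Int.toNat_of_nonneg (Int.emod_nonneg _ (by omega))
  have hres : ∀ (z : ℤ) (i : ℕ), (z % t).toNat = i → (i % d = j ↔ z % d = j) := by
    rintro z i rfl
    rw [← Int.natCast_inj, Int.natCast_mod, hlabel, Int.emod_emod_of_dvd _ (by exact_mod_cast hd)]
  have hmaps : ∀ x ∈ ({x ∈ Icc 1 c | ((y : ℤ) - (x : ℕ)) % d = j} : Finset ℕ),
      (((y : ℤ) - x) % t).toNat ∈ ({i ∈ range t | i % d = j} : Finset ℕ) := by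
    intro x hx
    simp only [mem_filter, mem_range] at hx ⊢
    refine ⟨?_, (hres _ _ rfl).2 hx.2⟩
    have := Int.emod_lt_of_pos ((y : ℤ) - x) (by omega : (0 : ℤ) < t)
    omega
  rw [colLabel, card_eq_sum_card_fiberwise hmaps]
  refine sum_congr rfl fun i hi => ?_
  rw [colLabel, filter_filter]
  congr 1
  refine filter_congr fun x _ => ?_
  have hi' := (mem_filter.1 hi).2
  constructor
  · rintro ⟨-, hx⟩; rw [← hlabel, hx]
  · intro hx
    have hx' : (((y : ℤ) - x) % t).toNat = i := by omega
    exact ⟨(hres _ _ hx').1 hi', hx'⟩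

lemma rLabel_eq_sum_colLabel (t : ℕ) (M : Multiset ℕ) (i : ℕ) :
    rLabel t M i = ∑ y ∈ Icc 1 M.sum, colLabel t y (conjCount M y) i := by
  rw [rLabel, card_filter, sum_product_right]
  refine sum_congr rfl fun y hy => ?_
  rw [← card_filter, colLabel]
  refine congrArg card (Finset.ext fun x => ?_)
  have := conjCount_le_card M y
  rw [mem_Icc] at hy
  rw [mem_filter, mem_filter, mem_Icc, mem_Icc, CellMem]
  constructor
  · rintro ⟨-, ⟨h1, -, h3⟩, hl⟩; exact ⟨⟨h1, h3⟩, hl⟩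
  · rintro ⟨⟨h1, h3⟩, hl⟩; exact ⟨⟨h1, by omega⟩, ⟨h1, hy.1, h3⟩, hl⟩

lemma rLabel_one (M : Multiset ℕ) : rLabel 1 M 0 = M.sum := by
  simp only [rLabel_eq_sum_colLabel, colLabel_one]
  exact sum_conjCount_Icc fun _ hp => Multiset.le_sum_of_mem hp

lemma rLabel_eq_sum_of_dvd {d t : ℕ} (hd : d ∣ t) (ht : 0 < t) (M : Multiset ℕ) (j : ℕ) :
    rLabel d M j = ∑ i ∈ range t with i % d = j, rLabel t M i := by
  simp only [rLabel_eq_sum_colLabel, colLabel_eq_sum_of_dvd hd ht]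
  exact sum_comm

lemma srank_modEq_two_mul_rLabel (M : Multiset ℕ) : srank M ≡ 2 * rLabel 2 M 1 [ZMOD 4] := by
  have hs : ∀ p ∈ M, p ≤ M.sum := fun _ hp => Multiset.le_sum_of_mem hp
  have hcol : ∀ y c : ℕ,
      2 * colLabel 2 y c 1 + c % 2 = c + 2 * if y % 2 = 0 then c % 2 else 0 := by
    intro y c; rw [colLabel_two_one]; split_ifs <;> omega
  set E := ∑ y ∈ Icc 1 M.sum with y % 2 = 0, conjCount M y
  set F := ∑ y ∈ Icc 1 M.sum with y % 2 = 0, conjCount M y % 2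
  have hcols : 2 * rLabel 2 M 1 + oddConjParts M = M.sum + 2 * F := by
    rw [rLabel_eq_sum_colLabel, oddConjParts_eq_sum, mul_sum, ← sum_add_distrib,
      sum_congr rfl fun y _ => hcol y _, sum_add_distrib, sum_conjCount_Icc hs, ← mul_sum,
      ← sum_filter]
  have hrows : M.sum = oddParts M + 2 * E := sum_eq_oddParts_add_two_mul hs
  have heven : 2 ∣ E + F := by
    rw [← sum_add_distrib]
    exact dvd_sum fun y _ => by omega
  rw [srank, Int.ModEq]
  omega

lemma rLabel_sub_eq_of_nvec_eq {t : ℕ} {M N : Multiset ℕ}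
    (h : ∀ i < t, nvec t N i = nvec t M i) :
    ∀ i < t, (rLabel t M i : ℤ) - rLabel t N i = (rLabel t M 0 : ℤ) - rLabel t N 0 := by
  intro i
  induction i with
  | zero => intro _; rfl
  | succ i ih =>
    intro hi
    have hn := h i (by omega)
    rw [nvec, nvec, Nat.mod_eq_of_lt hi] at hn
    have := ih (by omega)
    omega

lemma rLabel_sub_rLabel_of_dvd {d t : ℕ} (hd : d ∣ t) (ht : 0 < t) {M N : Multiset ℕ} {D : ℤ}
    (hD : ∀ i < t, (rLabel t M i : ℤ) - rLabel t N i = D) (j : ℕ) :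
    (rLabel d M j : ℤ) - rLabel d N j = #{i ∈ range t | i % d = j} * D := by
  rw [rLabel_eq_sum_of_dvd hd ht, rLabel_eq_sum_of_dvd hd ht, Nat.cast_sum, Nat.cast_sum,
    ← sum_sub_distrib, sum_congr rfl fun i hi => hD i (mem_range.1 (mem_filter.1 hi).1),
    sum_const, nsmul_eq_mul]

theorem srank_tcore_quotient_even_general (t a : ℕ) (ht : 2 ≤ t)
    (hta : t ≡ 2 * a [MOD 4]) (n m : ℕ) (π : Nat.Partition n) (σ : Nat.Partition m)
    (hvec : ∀ i < t, nvec t σ.parts i = nvec t π.parts i) :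
    (t : ℤ) ∣ ((n : ℤ) - (m : ℤ)) ∧
      srank π.parts ≡
        srank σ.parts + 2 * (a : ℤ) * (((n : ℤ) - (m : ℤ)) / (t : ℤ)) [ZMOD 4] := by
  have ht0 : 0 < t := by omega
  have h2t : 2 ∣ t := by unfold Nat.ModEq at hta; omega
  set D : ℤ := (rLabel t π.parts 0 : ℤ) - rLabel t σ.parts 0
  have hD := rLabel_sub_eq_of_nvec_eq hvec
  have hsize : (n : ℤ) - m = t * D := by
    have := rLabel_sub_rLabel_of_dvd (one_dvd t) ht0 hD 0
    rw [rLabel_one, rLabel_one, π.parts_sum, σ.parts_sum] at this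
    simpa only [Nat.mod_one, filter_true, card_range] using this
  have hodd : (rLabel 2 π.parts 1 : ℤ) - rLabel 2 σ.parts 1 = (t / 2 : ℕ) * D := by
    rw [rLabel_sub_rLabel_of_dvd h2t ht0 hD 1, card_filter_range_mod_two_eq_one]
  have htD : (t : ℤ) * D ≡ 2 * a * D [ZMOD 4] :=
    (by exact_mod_cast Int.natCast_modEq_iff.2 hta : (t : ℤ) ≡ 2 * a [ZMOD 4]).mul_right D
  refine ⟨⟨D, hsize⟩, ?_⟩
  rw [hsize, Int.mul_ediv_cancel_left _ (by omega)]
  have hsrank := (srank_modEq_two_mul_rLabel π.parts).sub (srank_modEq_two_mul_rLabel σ.parts)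
  have htwo : (2 : ℤ) * (t / 2 : ℕ) = t := by exact_mod_cast Nat.mul_div_cancel' h2t
  rw [← mul_sub, hodd, ← mul_assoc, htwo] at hsrank
  rw [add_comm]
  simpa only [sub_add_cancel] using (hsrank.trans htD).add_right (srank σ.parts)

/-- If `t ≥ 2`, `t ≡ 2a (mod 4)` with `a ∈ {0,1}`, `π` is a partition and `σ` is its
`t`-core (i.e. the `t`-core with the same `n`-vector), then `t` divides `|π| - |σ|` and
`srank(π) ≡ srank(σ) + 2a(|π| - |σ|)/t (mod 4)`. -/
theorem srank_tcore_quotient_even (t a : ℕ) (ht : 2 ≤ t) (ha : a = 0 ∨ a = 1)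
    (hta : t ≡ 2 * a [MOD 4]) (n m : ℕ) (π : Nat.Partition n) (σ : Nat.Partition m)
    (hσ : IsTCore t σ.parts) (hvec : ∀ i < t, nvec t σ.parts i = nvec t π.parts i) :
    (t : ℤ) ∣ ((n : ℤ) - (m : ℤ)) ∧
      srank π.parts ≡
        srank σ.parts + 2 * (a : ℤ) * (((n : ℤ) - (m : ℤ)) / (t : ℤ)) [ZMOD 4] :=
  srank_tcore_quotient_even_general t a ht hta n m π σ hvec

end BGG

end
end

section
/- Let π be a partition and suppose the Young diagram of π together with one additional cell in row x and column y (rows and columns indexed from 1) is the Young diagram of a partition π*. Then srank(π*) ≡ srank(π) + 2(x + y) (mod 4). -/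
open scoped Classical

noncomputable section

namespace BGG

private lemma conj_succ (M : Multiset ℕ) (p : ℕ) :
    conjCount M p = conjCount M (p + 1) + M.count p := by
  unfold conjCount
  induction M using Multiset.induction_on with
  | empty => simp
  | cons a s ih =>
    simp only [Multiset.filter_cons, Multiset.count_cons, Multiset.card_add]
    split_ifs <;> simp_all <;> omega

private lemma oddParts_add (A B : Multiset ℕ) :
    oddParts (A + B) = oddParts A + oddParts B := by
  simp [oddParts, Multiset.filter_add]

private lemma oddParts_singleton (k : ℕ) : oddParts {k} = k % 2 := by
  simp only [oddParts, Multiset.filter_singleton]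
  split_ifs with h
  · simp [Nat.odd_iff.1 h]
  · simp [Nat.even_iff.1 (Nat.not_odd_iff_even.1 h)]

/-- Attaching a single cell in row `x`, column `y` to the rim of the diagram of a partition
`π`, obtaining a partition `π*`, changes the srank by `2(x+y)` modulo `4`. -/
theorem srank_add_cell (n : ℕ) (π : Nat.Partition n) (πstar : Nat.Partition (n + 1))
    (x y : ℕ) (hx : 1 ≤ x) (hy : 1 ≤ y) (hnew : ¬ CellMem π.parts x y)
    (hdiag : ∀ a b : ℕ, CellMem πstar.parts a b ↔ (CellMem π.parts a b ∨ (a = x ∧ b = y))) :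
    srank πstar.parts ≡ srank π.parts + 2 * ((x : ℤ) + (y : ℤ)) [ZMOD 4] := by
  have hsum : π.parts.sum = n := π.parts_sum
  have hsum' : πstar.parts.sum = n + 1 := πstar.parts_sum
  have hxy : CellMem πstar.parts x y := (hdiag x y).2 (Or.inr ⟨rfl, rfl⟩)
  have hcylt : conjCount π.parts y < x := by
    by_contra h; push_neg at h; exact hnew ⟨hx, hy, h⟩
  have hcy' : conjCount πstar.parts y = x := by
    refine le_antisymm ?_ hxy.2.2
    by_contra h
    push_neg at h
    rcases (hdiag (x + 1) y).1 ⟨by omega, hy, by omega⟩ with h' | h'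
    · have := h'.2.2; omega
    · omega
  have hcy : conjCount π.parts y + 1 = x := by
    rcases Nat.lt_or_ge 1 x with h1 | h1
    · rcases (hdiag (x - 1) y).1 ⟨by omega, hy, by rw [hcy']; omega⟩ with h' | h'
      · have := h'.2.2; omega
      · omega
    · omega
  have hne : ∀ b, 1 ≤ b → b ≠ y → conjCount πstar.parts b = conjCount π.parts b := by
    intro b hb hby
    refine le_antisymm ?_ ?_
    · rcases Nat.eq_zero_or_pos (conjCount πstar.parts b) with h | h
      · omega
      · rcases (hdiag _ b).1 ⟨h, hb, le_refl _⟩ with h' | h'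
        · exact h'.2.2
        · exact absurd h'.2 hby
    · rcases Nat.eq_zero_or_pos (conjCount π.parts b) with h | h
      · omega
      · exact ((hdiag _ b).2 (Or.inl ⟨h, hb, le_refl _⟩)).2.2
  have hc : ∀ b, 1 ≤ b →
      conjCount πstar.parts b = conjCount π.parts b + (if b = y then 1 else 0) := by
    intro b hb
    by_cases hb' : b = y
    · subst hb'; simp [hcy']; omega
    · simp [hb', hne b hb hb']
  have hcnt0 : π.parts.count 0 = 0 :=
    Multiset.count_eq_zero.2 fun h => absurd (π.parts_pos h) (lt_irrefl 0)
  have hcnt0' : πstar.parts.count 0 = 0 :=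
    Multiset.count_eq_zero.2 fun h => absurd (πstar.parts_pos h) (lt_irrefl 0)
  have hcnt : ∀ a, 1 ≤ a → πstar.parts.count a + (if a + 1 = y then 1 else 0)
      = π.parts.count a + (if a = y then 1 else 0) := by
    intro a ha
    have e1 := conj_succ πstar.parts a
    have e2 := conj_succ π.parts a
    have e3 := hc a ha
    have e4 := hc (a + 1) (by omega)
    split_ifs at * <;> omega
  -- Step 1: change in the number of odd parts
  have E1 : oddParts πstar.parts + (y - 1) % 2 = oddParts π.parts + y % 2 := by
    rcases Nat.lt_or_ge y 2 with h2 | h2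
    · -- y = 1
      have hy1 : y = 1 := by omega
      subst hy1
      have hms : πstar.parts = π.parts + {1} := by
        ext a
        rcases Nat.eq_zero_or_pos a with ha | ha
        · subst ha; simp [hcnt0, hcnt0']
        · have := hcnt a ha
          simp only [Multiset.count_add, Multiset.count_singleton]
          split_ifs at * <;> omega
      rw [hms, oddParts_add, oddParts_singleton]
    · have hms : πstar.parts + {y - 1} = π.parts + {y} := by
        ext a
        simp only [Multiset.count_add, Multiset.count_singleton]
        rcases Nat.eq_zero_or_pos a with ha | ha
        · subst ha
          have h1 : ¬ ((0:ℕ) = y - 1) := by omega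
          have h2' : ¬ ((0:ℕ) = y) := by omega
          simp [hcnt0, hcnt0', h1, h2']
        · have := hcnt a ha
          split_ifs at * <;> omega
      have := congrArg oddParts hms
      rw [oddParts_add, oddParts_add, oddParts_singleton, oddParts_singleton] at this
      exact this
  -- Step 2: change in the number of odd parts of the conjugate
  have hy_le : y ≤ n + 1 := by
    have hpos : 0 < conjCount πstar.parts y := by omega
    rw [conjCount, Multiset.card_pos_iff_exists_mem] at hpos
    obtain ⟨p, hp⟩ := hpos
    rw [Multiset.mem_filter] at hp
    have : p ≤ πstar.parts.sum := Multiset.single_le_sum (fun a _ => Nat.zero_le a) p hp.1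
    omega
  have hπtop : conjCount π.parts (n + 1) = 0 := by
    rw [conjCount, Multiset.card_eq_zero, Multiset.filter_eq_nil]
    intro p hp
    have : p ≤ π.parts.sum := Multiset.single_le_sum (fun a _ => Nat.zero_le a) p hp
    omega
  have E2 : oddConjParts πstar.parts + (x - 1) % 2 = oddConjParts π.parts + x % 2 := by
    have hIcc : Finset.Icc 1 (n + 1) = insert (n + 1) (Finset.Icc 1 n) := by
      ext j; simp [Finset.mem_Icc, Finset.mem_insert]; omega
    have hnotmem : (n + 1) ∉ Finset.Icc 1 n := by simp
    have hcard : ∀ (M : Multiset ℕ) (N : ℕ),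
        ((Finset.Icc 1 N).filter (fun j => Odd (conjCount M j))).card
        = ∑ j ∈ Finset.Icc 1 N, (if Odd (conjCount M j) then 1 else 0) :=
      fun M N => Finset.card_filter _ _
    have hocp : oddConjParts πstar.parts
        = (if Odd (conjCount πstar.parts (n + 1)) then 1 else 0)
          + ∑ j ∈ Finset.Icc 1 n, (if Odd (conjCount πstar.parts j) then 1 else 0) := by
      rw [oddConjParts, hsum', hcard, hIcc, Finset.sum_insert hnotmem]
    have hocp' : oddConjParts π.parts
        = ∑ j ∈ Finset.Icc 1 n, (if Odd (conjCount π.parts j) then 1 else 0) := by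
      rw [oddConjParts, hsum, hcard]
    rcases Nat.lt_or_ge n y with hylarge | hysmall
    · -- y = n + 1
      have hyn : y = n + 1 := by omega
      subst hyn
      have hx1 : x = 1 := by omega
      have hstar : conjCount πstar.parts (n + 1) = 1 := by omega
      have hsame : ∀ j ∈ Finset.Icc 1 n,
          (if Odd (conjCount πstar.parts j) then (1:ℕ) else 0)
          = (if Odd (conjCount π.parts j) then 1 else 0) := by
        intro j hj
        rw [Finset.mem_Icc] at hj
        rw [hne j hj.1 (by omega)]
      have hone : (if Odd (1:ℕ) then (1:ℕ) else 0) = 1 := by decide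
      rw [hocp, hocp', Finset.sum_congr rfl hsame, hstar, hx1, hone]
      omega
    · -- y ≤ n
      have hymem : y ∈ Finset.Icc 1 n := Finset.mem_Icc.2 ⟨hy, hysmall⟩
      have htop' : conjCount πstar.parts (n + 1) = 0 := by
        rw [hne (n + 1) (by omega) (by omega), hπtop]
      have hsplit : ∀ (M : Multiset ℕ),
          ∑ j ∈ Finset.Icc 1 n, (if Odd (conjCount M j) then (1:ℕ) else 0)
          = (∑ j ∈ (Finset.Icc 1 n).erase y, (if Odd (conjCount M j) then 1 else 0))
            + (if Odd (conjCount M y) then 1 else 0) := by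
        intro M
        rw [Finset.sum_erase_add _ _ hymem]
      have hsame : ∀ j ∈ (Finset.Icc 1 n).erase y,
          (if Odd (conjCount πstar.parts j) then (1:ℕ) else 0)
          = (if Odd (conjCount π.parts j) then 1 else 0) := by
        intro j hj
        rw [Finset.mem_erase, Finset.mem_Icc] at hj
        rw [hne j hj.2.1 hj.1]
      rw [hocp, hocp', hsplit, hsplit, Finset.sum_congr rfl hsame, htop', hcy']
      have h1 : (if Odd x then (1:ℕ) else 0) = x % 2 := by
        split_ifs with h
        · simp [Nat.odd_iff.1 h]
        · simp [Nat.even_iff.1 (Nat.not_odd_iff_even.1 h)]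
      have h2 : (if Odd (conjCount π.parts y) then (1:ℕ) else 0) = (x - 1) % 2 := by
        have : conjCount π.parts y = x - 1 := by omega
        rw [this]
        split_ifs with h
        · simp [Nat.odd_iff.1 h]
        · simp [Nat.even_iff.1 (Nat.not_odd_iff_even.1 h)]
      have h0 : (if Odd (0:ℕ) then (1:ℕ) else 0) = 0 := by decide
      rw [h0, h1, h2]
      omega
  -- Step 3: conclude
  show _ % (4:ℤ) = _ % (4:ℤ)
  simp only [srank]
  omega


end BGG

end
end
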